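/- (Lemma 4.3) Let G=(V,E) be a locally finite graph with μ(x)≥μ0>0 and h1(x)≥h0>0, h2(x)≥h0>0 for all x∈V, p,q≥2, and F:V×ℝ²→ℝ with |F(x,s,t)| ≤ a(|(s,t)|)b(x) for a continuous a:[0,∞)→[0,∞) and b:V→[0,∞) with ∑μ(x)b(x)<∞. Suppose there exist α∈[0,p), β∈[0,q), bounded functions f1,f2:V→ℝ and g:V→ℝ with ∑_{x∈V}μ(x)|g(x)|<∞ such that F(x,s,t) ≤ f1(x)|s|^α + f2(x)|t|^β + g(x) for all (x,s,t)∈V×ℝ². Then for each λ>0 the functional Φ̄ − λΨ̄ is coercive on W^{1,p}(V)×W^{1,q}(V): for every K∈ℝ there exists R>0 such that ‖u‖_{W^{1,p}} + ‖v‖_{W^{1,q}} ≥ R implies Φ̄(u,v) − λΨ̄(u,v) ≥ K. -/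

import Mathlib

open Real

noncomputable section

variable {V : Type*}

/-- The bilinear form Γ on a locally finite graph. -/
def lgam (w : V → V → ℝ) (μ : V → ℝ) (u v : V → ℝ) (x : V) : ℝ :=
  (1 / (2 * μ x)) * ∑' y, w x y * (u y - u x) * (v y - v x)

/-- Length of the gradient: `|∇u|(x) = √(Γ(u,u)(x))`. -/
def lgnorm (w : V → V → ℝ) (μ : V → ℝ) (u : V → ℝ) (x : V) : ℝ :=
  Real.sqrt (lgam w μ u u x)

/-- Degree of a vertex. -/
def ldeg (w : V → V → ℝ) (x : V) : ℝ := ∑' y, w x y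

/-- Membership in the Sobolev space `W^{1,l}(V)` (with weight `h`). -/
def memW1 (w : V → V → ℝ) (μ h : V → ℝ) (l : ℝ) (u : V → ℝ) : Prop :=
  Summable (fun x => μ x * (lgnorm w μ u x ^ l + h x * |u x| ^ l))

/-- The Sobolev norm `‖u‖_{W^{1,l}}` (with weight `h`). -/
def w1norm (w : V → V → ℝ) (μ h : V → ℝ) (l : ℝ) (u : V → ℝ) : ℝ :=
  (∑' x, μ x * (lgnorm w μ u x ^ l + h x * |u x| ^ l)) ^ (1 / l)

/-- The functional Φ̄. -/
def PhiL (w : V → V → ℝ) (μ h1 h2 : V → ℝ) (p q : ℝ) (u v : V → ℝ) : ℝ :=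
  (1 / p) * w1norm w μ h1 p u ^ p + (1 / q) * w1norm w μ h2 q v ^ q

/-- The functional Ψ̄. -/
def PsiL (μ : V → ℝ) (F : V → ℝ → ℝ → ℝ) (u v : V → ℝ) : ℝ :=
  ∑' x, μ x * F x (u x) (v x)

end

/-
Away from a box `|s|, |t| ≤ R` the lower-order terms `f₁|s|^α + f₂|t|^β` are absorbed, by a
Young-type inequality, into `ε₁|s|^p + ε₂|t|^q`; on the box the growth bound gives `|F| ≤ M b`.
Hence `F(x,s,t) ≤ M b(x) + ε₁|s|^p + ε₂|t|^q + |g(x)|` everywhere. Summing against `μ` (the sum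
defining `Ψ̄` converges because the embedding into `ℓ^∞` keeps `u, v` in a box) and using
`h₀ ∑ μ|u|^p ≤ ‖u‖^p` with `ε₁ = h₀/(2pλ)`, `ε₂ = h₀/(2qλ)` gives
`Φ̄ − λΨ̄ ≥ ‖u‖^p/(2p) + ‖v‖^q/(2q) − D`, which is coercive.
-/

open Filter Set

lemma exists_mul_rpow_le_mul_rpow_add {α p : ℝ} (hα : 0 ≤ α) (hαp : α < p) (C : ℝ) {ε : ℝ}
    (hε : 0 < ε) : ∃ K, ∀ t, 0 ≤ t → C * t ^ α ≤ ε * t ^ p + K := by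
  obtain ⟨R, hR⟩ := eventually_atTop.1
    (((tendsto_rpow_atTop (sub_pos.2 hαp)).eventually_ge_atTop (C / ε)).and
      (eventually_gt_atTop 0))
  refine ⟨|C| * max R 0 ^ α, fun t ht => ?_⟩
  have htα : 0 ≤ t ^ α := Real.rpow_nonneg ht α
  have htp : 0 ≤ t ^ p := Real.rpow_nonneg ht p
  rcases le_or_gt R t with hRt | htR
  · obtain ⟨hCt, ht0⟩ := hR t hRt
    have hsplit : t ^ p = t ^ (p - α) * t ^ α := by rw [← Real.rpow_add ht0]; ring_nf
    have hK : 0 ≤ |C| * max R 0 ^ α := by positivity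
    calc C * t ^ α ≤ ε * t ^ (p - α) * t ^ α :=
          mul_le_mul_of_nonneg_right ((div_le_iff₀' hε).1 hCt) htα
      _ ≤ ε * t ^ p + |C| * max R 0 ^ α := by rw [hsplit]; linarith
  · calc C * t ^ α ≤ |C| * max R 0 ^ α :=
          mul_le_mul (le_abs_self C) (Real.rpow_le_rpow ht (htR.le.trans (le_max_left R 0)) hα)
            htα (abs_nonneg C)
      _ ≤ ε * t ^ p + |C| * max R 0 ^ α := le_add_of_nonneg_left (by positivity)

lemma exists_mul_rpow_add_mul_rpow_le {α β p q : ℝ} (hα : 0 ≤ α) (hαp : α < p) (hβ : 0 ≤ β)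
    (hβq : β < q) (C₁ C₂ : ℝ) {ε₁ ε₂ : ℝ} (hε₁ : 0 < ε₁) (hε₂ : 0 < ε₂) :
    ∃ R, ∀ s t : ℝ, R < |s| ∨ R < |t| →
      C₁ * |s| ^ α + C₂ * |t| ^ β ≤ ε₁ * |s| ^ p + ε₂ * |t| ^ q := by
  obtain ⟨K₁, hK₁⟩ := exists_mul_rpow_le_mul_rpow_add hα hαp C₁ (half_pos hε₁)
  obtain ⟨K₂, hK₂⟩ := exists_mul_rpow_le_mul_rpow_add hβ hβq C₂ (half_pos hε₂)
  have hlarge {r : ℝ} (hr : 0 < r) {ε : ℝ} (hε : 0 < ε) :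
      ∀ᶠ τ in atTop, K₁ + K₂ ≤ ε / 2 * τ ^ r :=
    ((tendsto_rpow_atTop hr).const_mul_atTop (half_pos hε)).eventually_ge_atTop _
  obtain ⟨R, hR⟩ := eventually_atTop.1
    ((hlarge (hα.trans_lt hαp) hε₁).and (hlarge (hβ.trans_lt hβq) hε₂))
  refine ⟨R, fun s t hst => ?_⟩
  have hs := hK₁ |s| (abs_nonneg s)
  have ht := hK₂ |t| (abs_nonneg t)
  have hsp : 0 ≤ ε₁ / 2 * |s| ^ p := by positivity
  have htq : 0 ≤ ε₂ / 2 * |t| ^ q := by positivity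
  rcases hst with hRs | hRt
  · linarith [(hR |s| hRs.le).1]
  · linarith [(hR |t| hRt.le).2]

lemma exists_le_mul_rpow_add_mul_rpow {p q c₁ c₂ : ℝ} (hp : 0 < p) (hq : 0 < q)
    (hc₁ : 0 < c₁) (hc₂ : 0 < c₂) (K : ℝ) :
    ∃ R, 0 < R ∧ ∀ x y, 0 ≤ x → 0 ≤ y → R ≤ x + y → K ≤ c₁ * x ^ p + c₂ * y ^ q := by
  obtain ⟨R₁, hR₁⟩ := eventually_atTop.1
    (((tendsto_rpow_atTop hp).const_mul_atTop hc₁).eventually_ge_atTop K)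
  obtain ⟨R₂, hR₂⟩ := eventually_atTop.1
    (((tendsto_rpow_atTop hq).const_mul_atTop hc₂).eventually_ge_atTop K)
  set R := max (max R₁ R₂) 1
  refine ⟨2 * R, by positivity, fun x y hx hy hxy => ?_⟩
  have hxp : 0 ≤ c₁ * x ^ p := by positivity
  have hyq : 0 ≤ c₂ * y ^ q := by positivity
  rcases le_or_gt R x with hRx | hxR
  · linarith [hR₁ x ((le_max_left _ _).trans ((le_max_left _ _).trans hRx))]
  · linarith [hR₂ y ((le_max_right _ _).trans ((le_max_left _ _).trans (by linarith)))]

section Sobolev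

variable {V : Type*} (w : V → V → ℝ) {μ h : V → ℝ} {l h₀ : ℝ} (u : V → ℝ)

lemma w1_term_nonneg (hμ : ∀ x, 0 ≤ μ x) (hh : ∀ x, 0 ≤ h x) (x : V) :
    0 ≤ μ x * (lgnorm w μ u x ^ l + h x * |u x| ^ l) :=
  mul_nonneg (hμ x) (add_nonneg (Real.rpow_nonneg (Real.sqrt_nonneg _) l)
    (mul_nonneg (hh x) (Real.rpow_nonneg (abs_nonneg _) l)))

lemma w1norm_nonneg (hμ : ∀ x, 0 ≤ μ x) (hh : ∀ x, 0 ≤ h x) : 0 ≤ w1norm w μ h l u :=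
  Real.rpow_nonneg (tsum_nonneg (w1_term_nonneg w u hμ hh)) _

lemma w1norm_rpow (hμ : ∀ x, 0 ≤ μ x) (hh : ∀ x, 0 ≤ h x) (hl : l ≠ 0) :
    w1norm w μ h l u ^ l = ∑' x, μ x * (lgnorm w μ u x ^ l + h x * |u x| ^ l) := by
  rw [w1norm, ← Real.rpow_mul (tsum_nonneg (w1_term_nonneg w u hμ hh)), one_div,
    inv_mul_cancel₀ hl, Real.rpow_one]

lemma mul_abs_rpow_le_w1_term (hμ : ∀ x, 0 ≤ μ x) (hh : ∀ x, h₀ ≤ h x) (x : V) :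
    h₀ * (μ x * |u x| ^ l) ≤ μ x * (lgnorm w μ u x ^ l + h x * |u x| ^ l) := by
  have hgrad : 0 ≤ μ x * lgnorm w μ u x ^ l :=
    mul_nonneg (hμ x) (Real.rpow_nonneg (Real.sqrt_nonneg _) l)
  have hpot : h₀ * (μ x * |u x| ^ l) ≤ μ x * (h x * |u x| ^ l) := by
    rw [mul_left_comm]
    exact mul_le_mul_of_nonneg_left
      (mul_le_mul_of_nonneg_right (hh x) (Real.rpow_nonneg (abs_nonneg _) l)) (hμ x)
  linarith [mul_add (μ x) (lgnorm w μ u x ^ l) (h x * |u x| ^ l)]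

variable {w u}

lemma summable_mul_abs_rpow (hu : memW1 w μ h l u) (hμ : ∀ x, 0 ≤ μ x) (hh₀ : 0 < h₀)
    (hh : ∀ x, h₀ ≤ h x) : Summable fun x => μ x * |u x| ^ l :=
  (hu.mul_left h₀⁻¹).of_nonneg_of_le
    (fun x => mul_nonneg (hμ x) (Real.rpow_nonneg (abs_nonneg _) l))
    fun x => (le_inv_mul_iff₀ hh₀).2 (mul_abs_rpow_le_w1_term w u hμ hh x)

lemma mul_tsum_le_w1norm_rpow (hu : memW1 w μ h l u) (hμ : ∀ x, 0 ≤ μ x) (hh₀ : 0 < h₀)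
    (hh : ∀ x, h₀ ≤ h x) (hl : l ≠ 0) :
    h₀ * ∑' x, μ x * |u x| ^ l ≤ w1norm w μ h l u ^ l := by
  rw [w1norm_rpow w u hμ (fun x => hh₀.le.trans (hh x)) hl, ← tsum_mul_left]
  exact ((summable_mul_abs_rpow hu hμ hh₀ hh).mul_left h₀).tsum_le_tsum
    (mul_abs_rpow_le_w1_term w u hμ hh) hu

lemma abs_le_w1norm_div (hu : memW1 w μ h l u) {μ₀ : ℝ} (hμ₀ : 0 < μ₀) (hμ : ∀ x, μ₀ ≤ μ x)
    (hh₀ : 0 < h₀) (hh : ∀ x, h₀ ≤ h x) (hl : 0 < l) (x : V) :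
    |u x| ≤ w1norm w μ h l u / (h₀ * μ₀) ^ (1 / l) := by
  have hμ' : ∀ y, 0 ≤ μ y := fun y => hμ₀.le.trans (hμ y)
  have hh' : ∀ y, 0 ≤ h y := fun y => hh₀.le.trans (hh y)
  have hc : 0 < h₀ * μ₀ := mul_pos hh₀ hμ₀
  have hpoint : h₀ * μ₀ * |u x| ^ l ≤ w1norm w μ h l u ^ l := by
    rw [w1norm_rpow w u hμ' hh' hl.ne']
    calc h₀ * μ₀ * |u x| ^ l ≤ h₀ * (μ x * |u x| ^ l) := by
          rw [mul_assoc]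
          exact mul_le_mul_of_nonneg_left
            (mul_le_mul_of_nonneg_right (hμ x) (Real.rpow_nonneg (abs_nonneg _) l)) hh₀.le
      _ ≤ _ := mul_abs_rpow_le_w1_term w u hμ' hh x
      _ ≤ _ := hu.le_tsum x fun y _ => w1_term_nonneg w u hμ' hh' y
  have hroot : 0 < (h₀ * μ₀) ^ (1 / l) := Real.rpow_pos_of_pos hc _
  rw [le_div_iff₀ hroot, ← Real.rpow_le_rpow_iff (by positivity) (w1norm_nonneg w u hμ' hh') hl,
    Real.mul_rpow (abs_nonneg _) hroot.le, ← Real.rpow_mul hc.le, one_div, inv_mul_cancel₀ hl.ne',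
    Real.rpow_one, mul_comm]
  exact hpoint

end Sobolev

section Nonlinearity

variable {V : Type*} {μ : V → ℝ} {F : V → ℝ → ℝ → ℝ} {a : ℝ → ℝ} {b g : V → ℝ}

lemma exists_abs_le_mul_of_abs_le (ha : ContinuousOn a (Ici 0)) (hb : ∀ x, 0 ≤ b x)
    (hFbound : ∀ x s t, |F x s t| ≤ a (Real.sqrt (s ^ 2 + t ^ 2)) * b x) (R : ℝ) :
    ∃ M, 0 ≤ M ∧ ∀ x s t, |s| ≤ R → |t| ≤ R → |F x s t| ≤ M * b x := by
  obtain ⟨M, hM⟩ := (isCompact_Icc (a := 0) (b := 2 * R)).bddAbove_image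
    (ha.mono Icc_subset_Ici_self)
  refine ⟨max M 0, le_max_right M 0, fun x s t hs ht => ?_⟩
  have hnorm : Real.sqrt (s ^ 2 + t ^ 2) ∈ Icc 0 (2 * R) :=
    ⟨Real.sqrt_nonneg _, Real.sqrt_le_iff.2 ⟨by linarith [abs_nonneg s],
      by nlinarith [sq_abs s, sq_abs t, abs_nonneg s, abs_nonneg t]⟩⟩
  exact (hFbound x s t).trans (mul_le_mul_of_nonneg_right
    ((hM (mem_image_of_mem a hnorm)).trans (le_max_left M 0)) (hb x))

lemma exists_le_mul_add_mul_rpow_add {f₁ f₂ : V → ℝ} {α β p q ε₁ ε₂ : ℝ}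
    (ha : ContinuousOn a (Ici 0)) (hb : ∀ x, 0 ≤ b x)
    (hFbound : ∀ x s t, |F x s t| ≤ a (Real.sqrt (s ^ 2 + t ^ 2)) * b x)
    (hα : 0 ≤ α) (hαp : α < p) (hβ : 0 ≤ β) (hβq : β < q)
    (hf₁ : ∃ C, ∀ x, |f₁ x| ≤ C) (hf₂ : ∃ C, ∀ x, |f₂ x| ≤ C)
    (hF : ∀ x s t, F x s t ≤ f₁ x * |s| ^ α + f₂ x * |t| ^ β + g x)
    (hε₁ : 0 < ε₁) (hε₂ : 0 < ε₂) :
    ∃ M, ∀ x s t, F x s t ≤ M * b x + ε₁ * |s| ^ p + ε₂ * |t| ^ q + |g x| := by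
  obtain ⟨C₁, hC₁⟩ := hf₁
  obtain ⟨C₂, hC₂⟩ := hf₂
  obtain ⟨R, hR⟩ := exists_mul_rpow_add_mul_rpow_le hα hαp hβ hβq C₁ C₂ hε₁ hε₂
  obtain ⟨M, hM0, hM⟩ := exists_abs_le_mul_of_abs_le ha hb hFbound R
  refine ⟨M, fun x s t => ?_⟩
  have hsp : 0 ≤ ε₁ * |s| ^ p := mul_nonneg hε₁.le (Real.rpow_nonneg (abs_nonneg s) p)
  have htq : 0 ≤ ε₂ * |t| ^ q := mul_nonneg hε₂.le (Real.rpow_nonneg (abs_nonneg t) q)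
  by_cases hst : |s| ≤ R ∧ |t| ≤ R
  · linarith [le_abs_self (F x s t), hM x s t hst.1 hst.2, abs_nonneg (g x)]
  · have hlower : f₁ x * |s| ^ α + f₂ x * |t| ^ β ≤ C₁ * |s| ^ α + C₂ * |t| ^ β :=
      add_le_add
        (mul_le_mul_of_nonneg_right ((le_abs_self _).trans (hC₁ x))
          (Real.rpow_nonneg (abs_nonneg s) α))
        (mul_le_mul_of_nonneg_right ((le_abs_self _).trans (hC₂ x))
          (Real.rpow_nonneg (abs_nonneg t) β))
    have hfar := hR s t (by rw [not_and_or, not_le, not_le] at hst; exact hst)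
    linarith [hF x s t, le_abs_self (g x), mul_nonneg hM0 (hb x)]

lemma summable_mul_of_abs_le {u v : V → ℝ} (ha : ContinuousOn a (Ici 0)) (hb : ∀ x, 0 ≤ b x)
    (hbsum : Summable fun x => μ x * b x)
    (hFbound : ∀ x s t, |F x s t| ≤ a (Real.sqrt (s ^ 2 + t ^ 2)) * b x)
    (hμ : ∀ x, 0 ≤ μ x) {Ru Rv : ℝ} (hu : ∀ x, |u x| ≤ Ru) (hv : ∀ x, |v x| ≤ Rv) :
    Summable fun x => μ x * F x (u x) (v x) := by
  obtain ⟨M, -, hM⟩ := exists_abs_le_mul_of_abs_le ha hb hFbound (max Ru Rv)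
  refine (hbsum.mul_left M).of_norm_bounded fun x => ?_
  rw [Real.norm_eq_abs, abs_mul, abs_of_nonneg (hμ x), mul_left_comm]
  exact mul_le_mul_of_nonneg_left
    (hM x _ _ ((hu x).trans (le_max_left _ _)) ((hv x).trans (le_max_right _ _))) (hμ x)

lemma PsiL_le {u v : V → ℝ} {p q M ε₁ ε₂ : ℝ} (hμ : ∀ x, 0 ≤ μ x)
    (hFsum : Summable fun x => μ x * F x (u x) (v x))
    (hFle : ∀ x s t, F x s t ≤ M * b x + ε₁ * |s| ^ p + ε₂ * |t| ^ q + |g x|)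
    (hbsum : Summable fun x => μ x * b x) (husum : Summable fun x => μ x * |u x| ^ p)
    (hvsum : Summable fun x => μ x * |v x| ^ q) (hgsum : Summable fun x => μ x * |g x|) :
    PsiL μ F u v ≤ M * ∑' x, μ x * b x + ε₁ * ∑' x, μ x * |u x| ^ p
      + ε₂ * ∑' x, μ x * |v x| ^ q + ∑' x, μ x * |g x| := by
  have hmaj := ((hbsum.mul_left M).add (husum.mul_left ε₁)).add (hvsum.mul_left ε₂) |>.add hgsum
  rw [← tsum_mul_left, ← tsum_mul_left, ← tsum_mul_left,
    ← (hbsum.mul_left M).tsum_add (husum.mul_left ε₁),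
    ← ((hbsum.mul_left M).add (husum.mul_left ε₁)).tsum_add (hvsum.mul_left ε₂),
    ← (((hbsum.mul_left M).add (husum.mul_left ε₁)).add (hvsum.mul_left ε₂)).tsum_add hgsum]
  refine hFsum.tsum_le_tsum (fun x => ?_) hmaj
  calc μ x * F x (u x) (v x)
      ≤ μ x * (M * b x + ε₁ * |u x| ^ p + ε₂ * |v x| ^ q + |g x|) :=
        mul_le_mul_of_nonneg_left (hFle x (u x) (v x)) (hμ x)
    _ = _ := by ring

end Nonlinearity

theorem stmt16_general {V : Type*}
    (w : V → V → ℝ) (μ : V → ℝ)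
    (hμ : ∀ x, 0 < μ x)
    (μ0 : ℝ) (hμ0 : 0 < μ0) (hμ0le : ∀ x, μ0 ≤ μ x)
    (h0 : ℝ) (hh0 : 0 < h0)
    (h1 h2 : V → ℝ)
    (hh1 : ∀ x, h0 ≤ h1 x) (hh2 : ∀ x, h0 ≤ h2 x)
    (p q : ℝ)
    (F : V → ℝ → ℝ → ℝ)
    (a : ℝ → ℝ) (ha : ContinuousOn a (Set.Ici 0))
    (b : V → ℝ) (hb : ∀ x, 0 ≤ b x) (hbsum : Summable (fun x => μ x * b x))
    (hFbound : ∀ x s t, |F x s t| ≤ a (Real.sqrt (s ^ 2 + t ^ 2)) * b x)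
    (α β : ℝ) (hα0 : 0 ≤ α) (hαp : α < p) (hβ0 : 0 ≤ β) (hβq : β < q)
    (f1 f2 g : V → ℝ)
    (hf1bdd : ∃ C, ∀ x, |f1 x| ≤ C) (hf2bdd : ∃ C, ∀ x, |f2 x| ≤ C)
    (hgsum : Summable (fun x => μ x * |g x|))
    (hF2 : ∀ x s t, F x s t ≤ f1 x * |s| ^ α + f2 x * |t| ^ β + g x)
    (lam : ℝ) (hlam : 0 < lam) :
    ∀ K : ℝ, ∃ R : ℝ, 0 < R ∧ ∀ u v : V → ℝ,
      memW1 w μ h1 p u → memW1 w μ h2 q v →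
      R ≤ w1norm w μ h1 p u + w1norm w μ h2 q v →
      K ≤ PhiL w μ h1 h2 p q u v - lam * PsiL μ F u v := by
  intro K
  have hp : 0 < p := hα0.trans_lt hαp
  have hq : 0 < q := hβ0.trans_lt hβq
  have hμ' : ∀ x, 0 ≤ μ x := fun x => (hμ x).le
  obtain ⟨M, hFle⟩ := exists_le_mul_add_mul_rpow_add (ε₁ := h0 / (2 * p * lam))
    (ε₂ := h0 / (2 * q * lam)) ha hb hFbound hα0 hαp hβ0 hβq hf1bdd hf2bdd hF2
    (by positivity) (by positivity)
  set D := lam * (M * ∑' x, μ x * b x + ∑' x, μ x * |g x|)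
  obtain ⟨R, hR0, hR⟩ := exists_le_mul_rpow_add_mul_rpow hp hq (c₁ := (2 * p)⁻¹)
    (c₂ := (2 * q)⁻¹) (by positivity) (by positivity) (K + D)
  refine ⟨R, hR0, fun u v hu hv hRuv => ?_⟩
  have hPsi := PsiL_le hμ' (summable_mul_of_abs_le ha hb hbsum hFbound hμ'
      (abs_le_w1norm_div hu hμ0 hμ0le hh0 hh1 hp) (abs_le_w1norm_div hv hμ0 hμ0le hh0 hh2 hq))
    hFle hbsum (summable_mul_abs_rpow hu hμ' hh0 hh1) (summable_mul_abs_rpow hv hμ' hh0 hh2) hgsum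
  have hu' := mul_tsum_le_w1norm_rpow hu hμ' hh0 hh1 hp.ne'
  have hv' := mul_tsum_le_w1norm_rpow hv hμ' hh0 hh2 hq.ne'
  have hlarge := hR _ _ (w1norm_nonneg w u hμ' fun x => hh0.le.trans (hh1 x))
    (w1norm_nonneg w v hμ' fun x => hh0.le.trans (hh2 x)) hRuv
  have hlamPsi : lam * PsiL μ F u v ≤ D + (2 * p)⁻¹ * (h0 * ∑' x, μ x * |u x| ^ p)
      + (2 * q)⁻¹ * (h0 * ∑' x, μ x * |v x| ^ q) := by
    refine (mul_le_mul_of_nonneg_left hPsi hlam.le).trans_eq ?_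
    field_simp
    ring
  have hhalf (r X : ℝ) : 1 / r * X = (2 * r)⁻¹ * X + (2 * r)⁻¹ * X := by ring
  unfold PhiL
  linarith [hhalf p (w1norm w μ h1 p u ^ p), hhalf q (w1norm w μ h2 q v ^ q),
    mul_le_mul_of_nonneg_left hu' (inv_nonneg.2 (by positivity : (0 : ℝ) ≤ 2 * p)),
    mul_le_mul_of_nonneg_left hv' (inv_nonneg.2 (by positivity : (0 : ℝ) ≤ 2 * q))]

/-- Lemma 4.3: coercivity of `Φ̄ − λΨ̄` on a locally finite graph. -/
theorem stmt16 {V : Type*} [Countable V]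
    (w : V → V → ℝ) (μ : V → ℝ)
    (hw_symm : ∀ x y, w x y = w y x) (hw_nonneg : ∀ x y, 0 ≤ w x y)
    (hw_diag : ∀ x, w x x = 0) (hlocfin : ∀ x, {y | 0 < w x y}.Finite)
    (hμ : ∀ x, 0 < μ x)
    (μ0 : ℝ) (hμ0 : 0 < μ0) (hμ0le : ∀ x, μ0 ≤ μ x)
    (h0 : ℝ) (hh0 : 0 < h0)
    (h1 h2 : V → ℝ) (hh1pos : ∀ x, 0 < h1 x) (hh2pos : ∀ x, 0 < h2 x)
    (hh1 : ∀ x, h0 ≤ h1 x) (hh2 : ∀ x, h0 ≤ h2 x)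
    (p q : ℝ) (hp : 2 ≤ p) (hq : 2 ≤ q)
    (F : V → ℝ → ℝ → ℝ)
    (a : ℝ → ℝ) (ha : ContinuousOn a (Set.Ici 0)) (ha0 : ∀ τ ∈ Set.Ici (0:ℝ), 0 ≤ a τ)
    (b : V → ℝ) (hb : ∀ x, 0 ≤ b x) (hbsum : Summable (fun x => μ x * b x))
    (hFbound : ∀ x s t, |F x s t| ≤ a (Real.sqrt (s ^ 2 + t ^ 2)) * b x)
    (α β : ℝ) (hα0 : 0 ≤ α) (hαp : α < p) (hβ0 : 0 ≤ β) (hβq : β < q)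
    (f1 f2 g : V → ℝ)
    (hf1bdd : ∃ C, ∀ x, |f1 x| ≤ C) (hf2bdd : ∃ C, ∀ x, |f2 x| ≤ C)
    (hgsum : Summable (fun x => μ x * |g x|))
    (hF2 : ∀ x s t, F x s t ≤ f1 x * |s| ^ α + f2 x * |t| ^ β + g x)
    (lam : ℝ) (hlam : 0 < lam) :
    ∀ K : ℝ, ∃ R : ℝ, 0 < R ∧ ∀ u v : V → ℝ,
      memW1 w μ h1 p u → memW1 w μ h2 q v →
      R ≤ w1norm w μ h1 p u + w1norm w μ h2 q v →
      K ≤ PhiL w μ h1 h2 p q u v - lam * PsiL μ F u v :=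
  stmt16_general w μ hμ μ0 hμ0 hμ0le h0 hh0 h1 h2 hh1 hh2 p q F a ha b hb hbsum hFbound α β hα0 hαp
    hβ0 hβq f1 f2 g hf1bdd hf2bdd hgsum hF2 lam hlam
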